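/- arXiv:2209.13271 — 3 statements merged into one kernel-verified Lean document; each statement's English description precedes it below -/
import Mathlib

section
/- Corollary 3.3, short step size: Under the stated setting with residual polynomial P = (1 - X/L)^t (gradient descent with step size h = 1/L) and integer t ≥ 1, writing κ = ℓ/L, one has ‖deriv xₜ θ - deriv x⋆ θ‖ ≤ (1 - κ)^(t-1) · ((1 + κ·(t-1)) · ‖deriv x₀ θ - deriv x⋆ θ‖ + (t/L)·G). -/
open Polynomial Matrix

attribute [local instance] Matrix.normedAddCommGroup Matrix.normedSpace

noncomputable def euclNorm {d : ℕ} (v : Fin d → ℝ) : ℝ := Real.sqrt (∑ i, v i ^ 2)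

/-!
Since `H` commutes with `H'`, differentiating `xₜ = x⋆ + P(H)(x₀ - x⋆)` gives
`xₜ' - x⋆' = P'(H) H' (x₀ - x⋆) + P(H)(x₀' - x⋆')`. Differentiating the optimality condition
`H x⋆ = -b` turns `H' (x₀ - x⋆)` into `g - H (x₀' - x⋆')` with `g = H' x₀ + H x₀' + b'`, so
`xₜ' - x⋆' = P'(H) g + (P - X P')(H) (x₀' - x⋆')`. By the spectral theorem the operator norm of a
polynomial in `H` is at most its sup over `[ℓ, L]`. For `P = (1 - X/L)^t` one has
`|P'| ≤ (t/L)(1 - κ)^(t-1)` there, and `(P - X P')(x) = (1 - s)^(t-1) (1 + (t-1) s)` with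
`s = x/L ∈ [κ, 1]`, which is decreasing in `s`.
-/

section MatrixCalculus

variable {𝕜 : Type*} [NontriviallyNormedField 𝕜] {m n p : Type*} [Fintype n]
  [Fintype p] {x : 𝕜}

theorem HasDerivAt.matrix_mul {A : 𝕜 → Matrix m n 𝕜} {B : 𝕜 → Matrix n p 𝕜}
    {A' : Matrix m n 𝕜} {B' : Matrix n p 𝕜} (hA : HasDerivAt A A' x) (hB : HasDerivAt B B' x) :
    HasDerivAt (fun y => A y * B y) (A' * B x + A x * B') x := by
  refine hasDerivAt_pi.2 fun i => hasDerivAt_pi.2 fun j => ?_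
  simp only [mul_apply, Matrix.add_apply, ← Finset.sum_add_distrib]
  exact HasDerivAt.fun_sum fun k _ =>
    (hasDerivAt_pi.1 (hasDerivAt_pi.1 hA i) k).mul (hasDerivAt_pi.1 (hasDerivAt_pi.1 hB k) j)

theorem HasDerivAt.matrix_mulVec {A : 𝕜 → Matrix m n 𝕜} {v : 𝕜 → n → 𝕜}
    {A' : Matrix m n 𝕜} {v' : n → 𝕜} (hA : HasDerivAt A A' x) (hv : HasDerivAt v v' x) :
    HasDerivAt (fun y => A y *ᵥ v y) (A' *ᵥ v x + A x *ᵥ v') x := by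
  refine hasDerivAt_pi.2 fun i => ?_
  simp only [mulVec, dotProduct, Pi.add_apply, ← Finset.sum_add_distrib]
  exact HasDerivAt.fun_sum fun k _ =>
    (hasDerivAt_pi.1 (hasDerivAt_pi.1 hA i) k).mul (hasDerivAt_pi.1 hv k)

theorem HasDerivAt.mulVec_eq_of_eventually {H : 𝕜 → Matrix n n 𝕜} {u b : 𝕜 → n → 𝕜}
    {H' : Matrix n n 𝕜} {u' b' : n → 𝕜} (hH : HasDerivAt H H' x) (hu : HasDerivAt u u' x)
    (hb : HasDerivAt b b' x) (hsol : ∀ᶠ y in nhds x, H y *ᵥ u y = b y) :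
    H' *ᵥ u x + H x *ᵥ u' = b' :=
  ((hH.matrix_mulVec hu).congr_of_eventuallyEq (hsol.mono fun _ hy => hy.symm)).unique hb

variable [DecidableEq n]

theorem HasDerivAt.matrix_aeval {A : 𝕜 → Matrix n n 𝕜} {A' : Matrix n n 𝕜}
    (hA : HasDerivAt A A' x) (hcomm : Commute (A x) A') (q : 𝕜[X]) :
    HasDerivAt (fun y => aeval (A y) q) (aeval (A x) (derivative q) * A') x := by
  induction q using Polynomial.induction_on with
  | C a =>
    simp only [aeval_C, derivative_C, map_zero, zero_mul]
    exact hasDerivAt_const x _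
  | add p q hp hq =>
    simp only [map_add, add_mul]
    exact hp.fun_add hq
  | monomial k a ih =>
    have := ih.matrix_mul hA
    simp only [pow_succ, ← mul_assoc, map_mul, aeval_X, derivative_mul, derivative_X, mul_one,
      map_add] at this ⊢
    convert this using 1
    rw [add_mul, mul_assoc _ (A x), hcomm.eq, ← mul_assoc]

theorem DifferentiableAt.matrix_det {A : 𝕜 → Matrix n n 𝕜} (hA : DifferentiableAt 𝕜 A x) :
    DifferentiableAt 𝕜 (fun y => (A y).det) x := by
  simp only [det_apply]
  exact DifferentiableAt.fun_sum fun σ _ => (DifferentiableAt.fun_finsetProd fun i _ =>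
    differentiableAt_pi.1 (differentiableAt_pi.1 hA (σ i)) i).const_smul _

theorem DifferentiableAt.matrix_adjugate {A : 𝕜 → Matrix n n 𝕜} (hA : DifferentiableAt 𝕜 A x) :
    DifferentiableAt 𝕜 (fun y => (A y).adjugate) x := by
  refine differentiableAt_pi.2 fun i => differentiableAt_pi.2 fun j => ?_
  simp only [adjugate_apply]
  refine DifferentiableAt.matrix_det (differentiableAt_pi.2 fun k => ?_)
  by_cases hk : k = j
  · subst hk; simp
  · simpa [updateRow_ne hk] using differentiableAt_pi.1 hA k

theorem DifferentiableAt.matrix_inv {A : 𝕜 → Matrix n n 𝕜} (hA : DifferentiableAt 𝕜 A x)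
    (hdet : (A x).det ≠ 0) : DifferentiableAt 𝕜 (fun y => (A y)⁻¹) x := by
  simp only [inv_def, Ring.inverse_eq_inv']
  exact (hA.matrix_det.inv hdet).smul hA.matrix_adjugate

theorem eventually_mulVec_inv_mulVec {H : 𝕜 → Matrix n n 𝕜} (hH : ContinuousAt H x)
    (hdet : (H x).det ≠ 0) (b : 𝕜 → n → 𝕜) :
    ∀ᶠ y in nhds x, H y *ᵥ ((H y)⁻¹ *ᵥ b y) = b y := by
  have hdet_cont : ContinuousAt (fun y => (H y).det) x :=
    continuous_id.matrix_det.continuousAt.comp hH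
  filter_upwards [hdet_cont.eventually_ne hdet] with y hy
  rw [mulVec_mulVec, mul_nonsing_inv _ (isUnit_iff_ne_zero.2 hy), one_mulVec]

theorem HasDerivAt.add_aeval_mulVec_sub {H : 𝕜 → Matrix n n 𝕜} {x₀ xs : 𝕜 → n → 𝕜}
    {H' : Matrix n n 𝕜} {x₀' xs' b' : n → 𝕜} (hH : HasDerivAt H H' x)
    (hcomm : Commute (H x) H') (hx₀ : HasDerivAt x₀ x₀' x) (hxs : HasDerivAt xs xs' x)
    (hopt : H' *ᵥ xs x + H x *ᵥ xs' = -b') (q : 𝕜[X]) :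
    HasDerivAt (fun y => xs y + aeval (H y) q *ᵥ (x₀ y - xs y))
      (xs' + (aeval (H x) (derivative q) *ᵥ (H' *ᵥ x₀ x + H x *ᵥ x₀' + b')
        + aeval (H x) (q - X * derivative q) *ᵥ (x₀' - xs'))) x := by
  refine (hxs.add ((hH.matrix_aeval hcomm q).matrix_mulVec (hx₀.sub hxs))).congr_deriv ?_
  obtain rfl : b' = -(H' *ᵥ xs x + H x *ᵥ xs') := by rw [hopt, neg_neg]
  simp only [mul_comm X, map_sub, map_mul, aeval_X, sub_mulVec, mulVec_sub, mulVec_add,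
    mulVec_neg, ← mulVec_mulVec, Pi.sub_apply]
  abel

end MatrixCalculus

theorem spectrum_subset_Icc_of_posSemidef {n : Type*} [Fintype n] [DecidableEq n]
    {S : Matrix n n ℝ} {ℓ L : ℝ}
    (hlower : (S - ℓ • 1).PosSemidef) (hupper : (L • 1 - S).PosSemidef) :
    spectrum ℝ S ⊆ Set.Icc ℓ L := by
  intro x hx
  have h₁ := (posSemidef_iff_isHermitian_and_spectrum_nonneg.1 hlower).2
  have h₂ := (posSemidef_iff_isHermitian_and_spectrum_nonneg.1 hupper).2
  rw [← Algebra.algebraMap_eq_smul_one, ← spectrum.sub_singleton_eq] at h₁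
  rw [← Algebra.algebraMap_eq_smul_one, ← spectrum.singleton_sub_eq] at h₂
  exact ⟨sub_nonneg.1 (h₁ (Set.sub_mem_sub hx rfl)), sub_nonneg.1 (h₂ (Set.sub_mem_sub rfl hx))⟩

theorem euclNorm_eq_norm_toLp {d : ℕ} (v : Fin d → ℝ) : euclNorm v = ‖WithLp.toLp 2 v‖ := by
  simp [euclNorm, EuclideanSpace.norm_eq]

-- Mathlib states this for the scoped L² operator norm on matrices; the sup norm is in force here.
theorem norm_toEuclideanCLM_diagonal {n : Type*} [Fintype n] [DecidableEq n] (w : n → ℝ) :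
    ‖toEuclideanCLM (n := n) (𝕜 := ℝ) (diagonal w)‖ = ‖w‖ := by
  have := l2_opNorm_diagonal (𝕜 := ℝ) w
  rwa [cstar_norm_def] at this

theorem norm_toEuclideanCLM_cfc_le {n : Type*} [Fintype n] [DecidableEq n]
    {S : Matrix n n ℝ} (hS : S.IsHermitian)
    {f : ℝ → ℝ} {c : ℝ} (hc : 0 ≤ c) (hf : ∀ x ∈ spectrum ℝ S, |f x| ≤ c) :
    ‖toEuclideanCLM (n := n) (𝕜 := ℝ) (cfc f S)‖ ≤ c := by
  have hU := hS.eigenvectorUnitary.2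
  rw [hS.cfc_eq, IsHermitian.cfc, Unitary.conjStarAlgAut_apply, map_mul, map_mul,
    CStarRing.norm_mul_mem_unitary _ (Unitary.map_mem _ (Unitary.star_mem hU)),
    CStarRing.norm_mem_unitary_mul _ (Unitary.map_mem _ hU),
    norm_toEuclideanCLM_diagonal, pi_norm_le_iff_of_nonneg hc]
  exact fun i => hf _ (hS.eigenvalues_mem_spectrum_real i)

theorem euclNorm_aeval_mulVec_le {d : ℕ} {S : Matrix (Fin d) (Fin d) ℝ} (hS : S.IsHermitian)
    {q : ℝ[X]} {c : ℝ} (hc : 0 ≤ c) (hq : ∀ x ∈ spectrum ℝ S, |q.eval x| ≤ c)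
    (v : Fin d → ℝ) : euclNorm (aeval S q *ᵥ v) ≤ c * euclNorm v := by
  rw [euclNorm_eq_norm_toLp, euclNorm_eq_norm_toLp, ← toEuclideanCLM_toLp (𝕜 := ℝ),
    ← cfc_polynomial q S hS.isSelfAdjoint]
  exact (ContinuousLinearMap.le_opNorm _ _).trans
    (by gcongr; exact norm_toEuclideanCLM_cfc_le hS hc hq)

section GradientDescentPolynomial

theorem antitoneOn_one_sub_pow_mul_one_add (m : ℕ) :
    AntitoneOn (fun s : ℝ => (1 - s) ^ m * (1 + m * s)) (Set.Icc 0 1) := by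
  have hderiv (s : ℝ) : HasDerivAt (fun s : ℝ => (1 - s) ^ m * (1 + m * s))
      (-(m * (m + 1) * s * (1 - s) ^ (m - 1))) s := by
    refine ((((hasDerivAt_id' s).const_sub 1).fun_pow m).fun_mul
      (((hasDerivAt_id' s).const_mul (m : ℝ)).const_add 1)).congr_deriv ?_
    rcases m with _ | m
    · simp
    · simp only [Nat.cast_add, Nat.cast_one, add_tsub_cancel_right, pow_succ]
      ring
  refine antitoneOn_of_deriv_nonpos (convex_Icc 0 1)
    (fun s _ => (hderiv s).continuousAt.continuousWithinAt)
    (fun s _ => (hderiv s).differentiableAt.differentiableWithinAt) fun s hs => ?_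
  rw [interior_Icc] at hs
  rw [(hderiv s).deriv, neg_nonpos]
  have : 0 ≤ 1 - s := by linarith [hs.2]
  exact mul_nonneg (mul_nonneg (by positivity) hs.1.le) (pow_nonneg this _)

noncomputable def gdResidual (L : ℝ) (t : ℕ) : ℝ[X] := (1 - C (1 / L) * X) ^ t

variable {ℓ L x : ℝ} (m : ℕ)

theorem eval_derivative_gdResidual :
    (derivative (gdResidual L (m + 1))).eval x = -((m + 1) / L * (1 - x / L) ^ m) := by
  simp [gdResidual, derivative_pow]
  ring

theorem abs_eval_derivative_gdResidual_le (hL : 0 < L) (hx : x ∈ Set.Icc ℓ L) :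
    |(derivative (gdResidual L (m + 1))).eval x| ≤ (m + 1) / L * (1 - ℓ / L) ^ m := by
  have h₀ : 0 ≤ 1 - x / L := by rw [sub_nonneg, div_le_one hL]; exact hx.2
  have h₁ : 1 - x / L ≤ 1 - ℓ / L := by gcongr; exact hx.1
  rw [eval_derivative_gdResidual, abs_neg, abs_of_nonneg (by positivity)]
  gcongr

theorem abs_eval_sub_X_mul_derivative_gdResidual_le (hℓ : 0 ≤ ℓ) (hL : 0 < L)
    (hx : x ∈ Set.Icc ℓ L) :
    |(gdResidual L (m + 1) - X * derivative (gdResidual L (m + 1))).eval x| ≤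
      (1 - ℓ / L) ^ m * (1 + m * (ℓ / L)) := by
  have heval : (gdResidual L (m + 1) - X * derivative (gdResidual L (m + 1))).eval x =
      (1 - x / L) ^ m * (1 + m * (x / L)) := by
    rw [eval_sub, eval_mul, eval_X, eval_derivative_gdResidual]
    simp only [gdResidual, eval_pow, eval_sub, eval_one, eval_mul, eval_C, eval_X]
    ring
  have hκ : 0 ≤ ℓ / L := by positivity
  have hs : ℓ / L ≤ x / L := by gcongr; exact hx.1
  have hs₁ : x / L ≤ 1 := (div_le_one hL).2 hx.2
  have hx₀ : 0 ≤ x / L := hκ.trans hs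
  rw [heval, abs_of_nonneg (mul_nonneg (pow_nonneg (by linarith) _) (by positivity))]
  exact antitoneOn_one_sub_pow_mul_one_add m ⟨hκ, hs.trans hs₁⟩ ⟨hκ.trans hs, hs₁⟩ hs

end GradientDescentPolynomial

theorem euclNorm_add_le {d : ℕ} (v w : Fin d → ℝ) : euclNorm (v + w) ≤ euclNorm v + euclNorm w := by
  simp only [euclNorm_eq_norm_toLp, WithLp.toLp_add]
  exact norm_add_le _ _

theorem jacobian_rate_gd_short_step_general {d : ℕ} (θ : ℝ)
    (H : ℝ → Matrix (Fin d) (Fin d) ℝ) (b x₀ : ℝ → (Fin d → ℝ))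
    (hH : DifferentiableAt ℝ H θ) (hb : DifferentiableAt ℝ b θ)
    (hx₀ : DifferentiableAt ℝ x₀ θ)
    (ℓ L : ℝ) (hℓ : 0 < ℓ) (hℓL : ℓ ≤ L)
    (hsym : (H θ).IsSymm)
    (hlower : (H θ - ℓ • 1).PosSemidef) (hupper : (L • 1 - H θ).PosSemidef)
    (hcomm : H θ * deriv H θ = deriv H θ * H θ)
    (t : ℕ) (ht : 1 ≤ t)
    (P : Polynomial ℝ) (hP : P = (1 - Polynomial.C (1 / L) * Polynomial.X) ^ t)
    (xstar : ℝ → (Fin d → ℝ))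
    (hxstar : ∀ θ' : ℝ, xstar θ' = -((H θ')⁻¹.mulVec (b θ')))
    (xt : ℝ → (Fin d → ℝ))
    (hxt : ∀ θ' : ℝ, xt θ' =
      xstar θ' + ((Polynomial.aeval (H θ')) P).mulVec (x₀ θ' - xstar θ'))
    (G : ℝ)
    (hG : G = euclNorm ((deriv H θ).mulVec (x₀ θ) + (H θ).mulVec (deriv x₀ θ) + deriv b θ))
    (κ : ℝ) (hκ : κ = ℓ / L) :
    euclNorm (deriv xt θ - deriv xstar θ) ≤
      (1 - κ) ^ (t - 1) *
        ((1 + κ * ((t : ℝ) - 1)) * euclNorm (deriv x₀ θ - deriv xstar θ)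
          + ((t : ℝ) / L) * G) := by
  obtain ⟨m, rfl⟩ := Nat.exists_eq_add_of_le' ht
  have hL : 0 < L := hℓ.trans_le hℓL
  have hHerm : (H θ).IsHermitian := isHermitian_iff_isSymm.2 hsym
  have hspec := spectrum_subset_Icc_of_posSemidef hlower hupper
  have hdet : (H θ).det ≠ 0 := ((isUnit_iff_isUnit_det _).1
    ((spectrum.zero_notMem_iff ℝ).1 fun h0 => (hℓ.trans_le (hspec h0).1).false)).ne_zero
  have hxs : DifferentiableAt ℝ xstar θ := by
    rw [funext hxstar]
    exact ((hH.matrix_inv hdet).hasDerivAt.matrix_mulVec hb.hasDerivAt).differentiableAt.fun_neg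
  have hopt := hH.hasDerivAt.mulVec_eq_of_eventually hxs.hasDerivAt hb.hasDerivAt.fun_neg
    ((eventually_mulVec_inv_mulVec hH.continuousAt hdet b).mono fun y hy => by rw [hxstar, mulVec_neg, hy])
  have hxt' := hH.hasDerivAt.add_aeval_mulVec_sub hcomm hx₀.hasDerivAt hxs.hasDerivAt hopt P
  rw [funext hxt, hxt'.deriv, add_sub_cancel_left, hP, ← gdResidual]
  subst hκ
  calc _ ≤ _ := euclNorm_add_le _ _
    _ ≤ (m + 1) / L * (1 - ℓ / L) ^ m * G
          + (1 - ℓ / L) ^ m * (1 + m * (ℓ / L)) * euclNorm (deriv x₀ θ - _) := by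
      have hκ₁ : 0 ≤ 1 - ℓ / L := by rw [sub_nonneg, div_le_one hL]; exact hℓL
      gcongr
      · rw [hG]
        exact euclNorm_aeval_mulVec_le hHerm (by positivity)
          (fun x hx => abs_eval_derivative_gdResidual_le m hL (hspec hx)) _
      · exact euclNorm_aeval_mulVec_le hHerm (by positivity)
          (fun x hx => abs_eval_sub_X_mul_derivative_gdResidual_le m hℓ.le hL (hspec hx)) _
    _ = _ := by push_cast; ring

/-- Corollary 3.3, short step size `h = 1/L`. -/
theorem jacobian_rate_gd_short_step {d : ℕ} (hd : 1 ≤ d) (θ : ℝ)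
    (H : ℝ → Matrix (Fin d) (Fin d) ℝ) (b x₀ : ℝ → (Fin d → ℝ))
    (hH : DifferentiableAt ℝ H θ) (hb : DifferentiableAt ℝ b θ)
    (hx₀ : DifferentiableAt ℝ x₀ θ)
    (ℓ L : ℝ) (hℓ : 0 < ℓ) (hℓL : ℓ ≤ L)
    (hsym : (H θ).IsSymm)
    (hlower : (H θ - ℓ • 1).PosSemidef) (hupper : (L • 1 - H θ).PosSemidef)
    (hcomm : H θ * deriv H θ = deriv H θ * H θ)
    (t : ℕ) (ht : 1 ≤ t)
    (P : Polynomial ℝ) (hP : P = (1 - Polynomial.C (1 / L) * Polynomial.X) ^ t)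
    (xstar : ℝ → (Fin d → ℝ))
    (hxstar : ∀ θ' : ℝ, xstar θ' = -((H θ')⁻¹.mulVec (b θ')))
    (xt : ℝ → (Fin d → ℝ))
    (hxt : ∀ θ' : ℝ, xt θ' =
      xstar θ' + ((Polynomial.aeval (H θ')) P).mulVec (x₀ θ' - xstar θ'))
    (G : ℝ)
    (hG : G = euclNorm ((deriv H θ).mulVec (x₀ θ) + (H θ).mulVec (deriv x₀ θ) + deriv b θ))
    (κ : ℝ) (hκ : κ = ℓ / L) :
    euclNorm (deriv xt θ - deriv xstar θ) ≤
      (1 - κ) ^ (t - 1) *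
        ((1 + κ * ((t : ℝ) - 1)) * euclNorm (deriv x₀ θ - deriv xstar θ)
          + ((t : ℝ) / L) * G) :=
  jacobian_rate_gd_short_step_general θ H b x₀ hH hb hx₀ ℓ L hℓ hℓL hsym hlower hupper hcomm t ht P
    hP xstar hxstar xt hxt G hG κ hκ
end

section
/- Lower bound for unrolling (Proposition 4.1, polynomial form): Let 0 < ℓ < L, κ = ℓ/L, ξ = (1-√κ)/(1+√κ), and let t be a natural number. For every real polynomial P with P.natDegree ≤ t and P.eval 0 = 1, setting Q = P - X · P.derivative (the Jacobian-error polynomial of the first-order method with residual polynomial P, which satisfies Q.eval 0 = 1 and Q.derivative.eval 0 = 0), there exists λ ∈ [ℓ, L] such that |Q.eval λ| ≥ 2/(ξ^t + ξ^(-t)). Consequently, for every dimension d ≥ 1 there exist a symmetric matrix H with ℓ•1 ≼ H ≼ L•1 (in the Loewner order) and a nonzero vector v with ‖((Polynomial.aeval H) Q).mulVec v‖ ≥ (2/(ξ^t + ξ^(-t))) · ‖v‖. -/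
open Polynomial Matrix

/-!
The affine map sending `[ℓ, L]` onto `[-1, 1]` (reversing orientation) sends `0` to
`σ = (L + ℓ) / (L - ℓ) ≥ 1`. Chebyshev's inequality `|q(σ)| ≤ T_t(σ) · max_{[-1,1]} |q|` for
`deg q ≤ t`, a consequence of the extremal property of `T_t` in Mathlib, then gives
`λ ∈ [ℓ, L]` with `1 = |Q(0)| ≤ T_t(σ) |Q(λ)|`. Since `σ = (ξ + ξ⁻¹) / 2` and
`T_t((x + x⁻¹) / 2) = (x^t + x^-t) / 2`, this is the claimed bound; the matrix version takes
`H = λ • 1`.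
-/

open Set

namespace Polynomial.Chebyshev

theorem abs_eval_le_eval_T_mul {p : ℝ[X]} {n : ℕ} (hp : p.natDegree ≤ n) {M : ℝ}
    (hM : ∀ y ∈ Icc (-1 : ℝ) 1, |p.eval y| ≤ M) {x : ℝ} (hx : 1 ≤ x) :
    |p.eval x| ≤ (T ℝ n).eval x * M := by
  rcases (abs_nonneg _ |>.trans (hM 0 (by norm_num))).eq_or_lt with rfl | hM0
  · have hroots : (Icc (-1 : ℝ) 1).Infinite := Icc_infinite (by norm_num)
    rw [p.eq_zero_of_infinite_isRoot (hroots.mono fun y hy => abs_nonpos_iff.1 (hM y hy))]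
    simp
  have upper : ∀ q : ℝ[X], q.natDegree ≤ n → (∀ y ∈ Icc (-1 : ℝ) 1, |q.eval y| ≤ M) →
      q.eval x ≤ (T ℝ n).eval x * M := by
    intro q hq hqM
    have := eval_iterate_derivative_le_of_forall_abs_le_one (k := 0) (P := Polynomial.C M⁻¹ * q) hx
      (degree_le_of_natDegree_le (natDegree_C_mul_le _ _ |>.trans hq)) fun y hy => by
        rw [eval_mul, eval_C, abs_mul, abs_inv, abs_of_pos hM0, inv_mul_le_one₀ hM0]
        exact hqM y hy
    rwa [Function.iterate_zero_apply, Function.iterate_zero_apply, eval_mul, eval_C,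
      inv_mul_le_iff₀ hM0, mul_comm] at this
  have lower := upper (-p) (by rwa [natDegree_neg]) (by simpa using hM)
  rw [eval_neg] at lower
  exact abs_le.2 ⟨by linarith, upper p hp hM⟩

theorem exists_abs_eval_le_eval_T_mul {p : ℝ[X]} {n : ℕ} (hp : p.natDegree ≤ n) {x : ℝ}
    (hx : 1 ≤ x) : ∃ y ∈ Icc (-1 : ℝ) 1, |p.eval x| ≤ (T ℝ n).eval x * |p.eval y| := by
  obtain ⟨y, hy, hmax⟩ := isCompact_Icc.exists_isMaxOn (nonempty_Icc.2 (by norm_num : (-1 : ℝ) ≤ 1))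
    (p.continuous.abs.continuousOn)
  exact ⟨y, hy, abs_eval_le_eval_T_mul hp (fun z hz => hmax hz) hx⟩

theorem exists_mem_Icc_abs_eval_le_eval_T_mul {p : ℝ[X]} {n : ℕ} (hp : p.natDegree ≤ n)
    {a b z : ℝ} (hab : a < b) (hz : z ≤ a) :
    ∃ y ∈ Icc a b, |p.eval z| ≤ (T ℝ n).eval ((a + b - 2 * z) / (b - a)) * |p.eval y| := by
  let q : ℝ[X] := Polynomial.C (-((b - a) / 2)) * X + Polynomial.C ((a + b) / 2)
  have hq : ∀ y, q.eval y = (a + b) / 2 - (b - a) / 2 * y := fun y => by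
    simp only [q, eval_add, eval_mul, eval_C, eval_X]; ring
  have hdeg : (p.comp q).natDegree ≤ n :=
    natDegree_comp_le.trans ((Nat.mul_le_mul hp natDegree_linear_le).trans (mul_one n).le)
  have hba : 0 < b - a := by linarith
  obtain ⟨y, ⟨hy₁, hy₂⟩, hy⟩ := exists_abs_eval_le_eval_T_mul hdeg
    (x := (a + b - 2 * z) / (b - a)) (by rw [le_div_iff₀ hba]; linarith)
  have hqz : q.eval ((a + b - 2 * z) / (b - a)) = z := by rw [hq]; field_simp; ring
  refine ⟨q.eval y, ⟨?_, ?_⟩, ?_⟩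
  · rw [hq]; nlinarith
  · rw [hq]; nlinarith
  · simpa only [eval_comp, hqz] using hy

theorem T_real_eval_half_add_inv {x : ℝ} (hx : 0 < x) (n : ℤ) :
    (T ℝ n).eval ((x + x⁻¹) / 2) = (x ^ n + x ^ (-n)) / 2 := by
  rw [← Real.cosh_log hx, T_real_cosh, ← Real.log_zpow, Real.cosh_log (zpow_pos hx n),
    _root_.zpow_neg]

end Polynomial.Chebyshev

theorem one_sub_sqrt_div_one_add_sqrt_add_inv_div_two {κ : ℝ} (h0 : 0 ≤ κ) (h1 : κ < 1) :
    ((1 - √κ) / (1 + √κ) + ((1 - √κ) / (1 + √κ))⁻¹) / 2 = (1 + κ) / (1 - κ) := by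
  obtain ⟨s, hs, rfl⟩ : ∃ s, 0 ≤ s ∧ κ = s ^ 2 := ⟨√κ, Real.sqrt_nonneg κ, (Real.sq_sqrt h0).symm⟩
  rw [Real.sqrt_sq hs]
  have : 1 - s ≠ 0 := by nlinarith
  have : 1 - s ^ 2 ≠ 0 := by linarith
  field_simp
  ring

theorem Polynomial.natDegree_sub_X_mul_derivative_le {R : Type*} [CommRing R] (p : R[X]) :
    (p - X * derivative p).natDegree ≤ p.natDegree := by
  rcases eq_or_ne p.natDegree 0 with hp | hp
  · rw [eq_C_of_natDegree_eq_zero hp, derivative_C, mul_zero, sub_zero]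
  refine (natDegree_sub_le _ _).trans (max_le le_rfl ?_)
  have := natDegree_derivative_le p
  have := natDegree_mul_le (p := (X : R[X])) (q := derivative p)
  have := natDegree_X_le (R := R)
  omega

theorem Polynomial.aeval_smul_one_mulVec {R n : Type*} [CommRing R] [Fintype n] [DecidableEq n]
    (p : R[X]) (c : R) (v : n → R) : aeval (c • 1 : Matrix n n R) p *ᵥ v = p.eval c • v := by
  rw [← Algebra.algebraMap_eq_smul_one, aeval_algebraMap_apply_eq_algebraMap_eval,
    Algebra.algebraMap_eq_smul_one, smul_mulVec, one_mulVec]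

theorem Matrix.posSemidef_smul_one_sub_smul_one {n : Type*} [Fintype n] [DecidableEq n] {a b : ℝ}
    (hab : b ≤ a) : (a • 1 - b • 1 : Matrix n n ℝ).PosSemidef := by
  rw [← sub_smul]
  exact PosSemidef.one.smul (sub_nonneg.2 hab)

theorem euclNorm_smul {d : ℕ} (c : ℝ) (v : Fin d → ℝ) : euclNorm (c • v) = |c| * euclNorm v := by
  simp only [euclNorm, Pi.smul_apply, smul_eq_mul, mul_pow, ← Finset.mul_sum]
  rw [Real.sqrt_mul (sq_nonneg c), Real.sqrt_sq_eq_abs]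

open Polynomial.Chebyshev in
/-- Lower bound for unrolling (Proposition 4.1, polynomial form). -/
theorem unrolling_lower_bound (ℓ L κ ξ : ℝ) (hℓ : 0 < ℓ) (hℓL : ℓ < L)
    (hκ : κ = ℓ / L) (hξ : ξ = (1 - Real.sqrt κ) / (1 + Real.sqrt κ))
    (t : ℕ) (P : Polynomial ℝ) (hdeg : P.natDegree ≤ t) (hP0 : P.eval 0 = 1)
    (Q : Polynomial ℝ) (hQ : Q = P - Polynomial.X * P.derivative) :
    (∃ lam ∈ Set.Icc ℓ L, 2 / (ξ ^ t + ξ ^ (-(t : ℤ))) ≤ |Q.eval lam|) ∧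
      ∀ d : ℕ, 1 ≤ d →
        ∃ (H : Matrix (Fin d) (Fin d) ℝ) (v : Fin d → ℝ),
          H.IsSymm ∧ (H - ℓ • 1).PosSemidef ∧ (L • 1 - H).PosSemidef ∧ v ≠ 0 ∧
            (2 / (ξ ^ t + ξ ^ (-(t : ℤ)))) * euclNorm v ≤
              euclNorm (((Polynomial.aeval H) Q).mulVec v) := by
  have hL : 0 < L := hℓ.trans hℓL
  have hκ0 : 0 ≤ κ := hκ ▸ by positivity
  have hκ1 : κ < 1 := hκ ▸ (div_lt_one hL).2 hℓL
  have hξ0 : 0 < ξ := hξ ▸ div_pos (by linarith [(Real.sqrt_lt' one_pos).2 (by simpa)])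
    (by positivity)
  have hσ : (ℓ + L - 2 * 0) / (L - ℓ) = (ξ + ξ⁻¹) / 2 := by
    rw [hξ, one_sub_sqrt_div_one_add_sqrt_add_inv_div_two hκ0 hκ1, hκ]
    field_simp
    ring
  have hQ0 : Q.eval 0 = 1 := by simp [hQ, hP0]
  have hQdeg : Q.natDegree ≤ t := hQ ▸ (natDegree_sub_X_mul_derivative_le P).trans hdeg
  obtain ⟨lam, hlam, hQlam⟩ := exists_mem_Icc_abs_eval_le_eval_T_mul hQdeg hℓL hℓ.le
  rw [hQ0, abs_one, hσ, T_real_eval_half_add_inv hξ0, zpow_natCast] at hQlam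
  have hc : 2 / (ξ ^ t + ξ ^ (-(t : ℤ))) ≤ |Q.eval lam| := by
    rw [div_le_iff₀ (by positivity)]
    linarith
  refine ⟨⟨lam, hlam, hc⟩, fun d hd => ⟨lam • 1, Pi.single ⟨0, hd⟩ 1, ?_, ?_, ?_, ?_, ?_⟩⟩
  · exact (isSymm_one).smul lam
  · exact posSemidef_smul_one_sub_smul_one hlam.1
  · exact posSemidef_smul_one_sub_smul_one hlam.2
  · exact Pi.single_ne_zero_iff.2 one_ne_zero
  · rw [aeval_smul_one_mulVec, euclNorm_smul]
    exact mul_le_mul_of_nonneg_right hc (Real.sqrt_nonneg _)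
end

section
/- Sobolev-norm bound on the Jacobian error (Proposition 4.2, deterministic form): Under the stated setting, suppose additionally that ‖(deriv H θ).mulVec (x₀ θ - x⋆ θ)‖² ≤ η · ‖deriv x₀ θ - deriv x⋆ θ‖² for some η ≥ 0. Then ‖deriv xₜ θ - deriv x⋆ θ‖² ≤ 2 · ( Matrix.trace ((Polynomial.aeval (H θ) P)^2) + η · Matrix.trace ((Polynomial.aeval (H θ) P.derivative)^2) ) · ‖deriv x₀ θ - deriv x⋆ θ‖². -/
/-! Write `v = x₀ - x⋆`, so that `xₜ - x⋆ = P(H) v`. Because `H(θ)` commutes with `H'(θ)`, the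
derivative of `θ ↦ P(H(θ))` is `P'(H) H'`, hence `∂xₜ - ∂x⋆ = P'(H) (H' v) + P(H) (∂x₀ - ∂x⋆)`.
Cauchy–Schwarz row by row bounds `‖M u‖²` by `‖M‖_F² ‖u‖²`, for symmetric `M` the squared Frobenius
norm is `tr (M²)`, the hypothesis bounds `‖H' v‖²` by `η ‖∂x₀ - ∂x⋆‖²`, and
`‖a + b‖² ≤ 2‖a‖² + 2‖b‖²` combines the two terms. -/

open Polynomial Matrix

attribute [local instance] Matrix.normedAddCommGroup Matrix.normedSpace

theorem map_ringInverse {R S F : Type*} [Semiring R] [Semiring S] [EquivLike F R S]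
    [RingEquivClass F R S] (e : F) (a : R) : e (Ring.inverse a) = Ring.inverse (e a) := by
  by_cases h : IsUnit a
  · obtain ⟨u, rfl⟩ := h
    rw [Ring.inverse_unit]
    exact (Ring.inverse_unit (Units.map (e : R →* S) u)).symm
  · rw [Ring.inverse_non_unit _ h, Ring.inverse_non_unit _ (by simpa using h), map_zero]

namespace Matrix

variable {n : Type*} [Fintype n]

theorem IsSymm.aeval {R : Type*} [CommSemiring R] [DecidableEq n] {A : Matrix n n R}
    (h : A.IsSymm) (p : R[X]) : (aeval A p).IsSymm := by
  induction p using Polynomial.induction_on' with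
  | add p q hp hq => rw [map_add]; exact hp.add hq
  | monomial k a =>
    rw [IsSymm, aeval_monomial, ← Algebra.smul_def, transpose_smul, transpose_pow, h.eq]

theorem IsSymm.trace_sq {R : Type*} [Semiring R] [DecidableEq n] {M : Matrix n n R}
    (h : M.IsSymm) : trace (M ^ 2) = ∑ i, ∑ j, M i j ^ 2 := by
  simp only [trace, diag_apply, sq, mul_apply]
  exact Finset.sum_congr rfl fun i _ => Finset.sum_congr rfl fun j _ => by rw [h.apply i j]

end Matrix

section Derivatives

variable {𝕜 : Type*} [NontriviallyNormedField 𝕜] {l m n : Type*} {x : 𝕜}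

theorem hasDerivAt_matrix_iff [Fintype n] {f : 𝕜 → Matrix m n 𝕜} {f' : Matrix m n 𝕜} :
    HasDerivAt f f' x ↔ ∀ i j, HasDerivAt (fun t => f t i j) (f' i j) x :=
  hasDerivAt_pi.trans <| forall_congr' fun _ => hasDerivAt_pi

theorem HasDerivAt.matrix_mul_s7 [Fintype m] [Fintype n] {f : 𝕜 → Matrix l m 𝕜}
    {g : 𝕜 → Matrix m n 𝕜} {f' : Matrix l m 𝕜} {g' : Matrix m n 𝕜} (hf : HasDerivAt f f' x)
    (hg : HasDerivAt g g' x) :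
    HasDerivAt (fun t => f t * g t) (f' * g x + f x * g') x := by
  rw [hasDerivAt_matrix_iff] at hf hg ⊢
  intro i j
  simpa [mul_apply, Finset.sum_add_distrib] using
    HasDerivAt.fun_sum fun k (_ : k ∈ Finset.univ) => (hf i k).mul (hg k j)

theorem HasDerivAt.matrix_mulVec_s7 [Fintype n] {f : 𝕜 → Matrix m n 𝕜} {u : 𝕜 → n → 𝕜}
    {f' : Matrix m n 𝕜} {u' : n → 𝕜} (hf : HasDerivAt f f' x) (hu : HasDerivAt u u' x) :
    HasDerivAt (fun t => f t *ᵥ u t) (f' *ᵥ u x + f x *ᵥ u') x := by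
  rw [hasDerivAt_matrix_iff] at hf
  rw [hasDerivAt_pi] at hu ⊢
  intro i
  simpa [mulVec, dotProduct, Finset.sum_add_distrib] using
    HasDerivAt.fun_sum fun k (_ : k ∈ Finset.univ) => (hf i k).mul (hu k)

/-- `hc` collapses the derivative `∑ i < k, f ^ i * f' * f ^ (k - 1 - i)` of `f ^ k` at `x` to
`k • f ^ (k - 1) * f'`. -/
theorem HasDerivAt.matrix_aeval_s7 [Fintype n] [DecidableEq n] {f : 𝕜 → Matrix n n 𝕜}
    {f' : Matrix n n 𝕜} (hf : HasDerivAt f f' x) (hc : Commute (f x) f') (p : 𝕜[X]) :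
    HasDerivAt (fun t => aeval (f t) p) (aeval (f x) (derivative p) * f') x := by
  induction p using Polynomial.induction_on with
  | C a =>
    simp only [aeval_C, derivative_C, map_zero, zero_mul]
    exact hasDerivAt_const x _
  | add p q hp hq =>
    simp only [map_add, add_mul]
    exact hp.add hq
  | monomial k a ih =>
    have hpow : ∀ A : Matrix n n 𝕜, aeval A (C a * X ^ (k + 1)) = aeval A (C a * X ^ k) * A :=
      fun A => by rw [pow_succ, ← mul_assoc, _root_.map_mul, aeval_X]
    simp only [hpow]
    convert ih.matrix_mul_s7 hf using 1
    rw [pow_succ, ← mul_assoc, derivative_mul, derivative_X, mul_one, map_add, _root_.map_mul,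
      aeval_X, add_mul, mul_assoc, mul_assoc, hc.eq]

end Derivatives

theorem DifferentiableAt.matrix_inv_s7 {𝕜 E : Type*} [RCLike 𝕜] [NormedAddCommGroup E]
    [NormedSpace 𝕜 E] {n : Type*} [Fintype n] [DecidableEq n] {f : E → Matrix n n 𝕜} {x : E}
    (hf : DifferentiableAt 𝕜 f x) (hx : IsUnit (f x)) :
    DifferentiableAt 𝕜 (fun t => (f t)⁻¹) x := by
  let e := toEuclideanCLM (n := n) (𝕜 := 𝕜)
  let L := e.toAlgEquiv.toLinearEquiv.toContinuousLinearEquiv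
  have hinv : ∀ A : Matrix n n 𝕜, A⁻¹ = e.symm (Ring.inverse (e A)) := fun A => by
    rw [nonsing_inv_eq_ringInverse, ← map_ringInverse, StarAlgEquiv.symm_apply_apply]
  simp_rw [hinv]
  exact L.symm.differentiableAt.comp x ((L.differentiableAt.comp x hf).inverse (hx.map e))

section EuclNorm

variable {d : ℕ}

theorem euclNorm_sq (v : Fin d → ℝ) : euclNorm v ^ 2 = ∑ i, v i ^ 2 :=
  Real.sq_sqrt (by positivity)

theorem euclNorm_add_sq_le (a b : Fin d → ℝ) :
    euclNorm (a + b) ^ 2 ≤ 2 * euclNorm a ^ 2 + 2 * euclNorm b ^ 2 := by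
  simp only [euclNorm_sq, Finset.mul_sum, ← Finset.sum_add_distrib, Pi.add_apply]
  exact Finset.sum_le_sum fun i _ => by nlinarith [sq_nonneg (a i - b i)]

theorem euclNorm_mulVec_sq_le (M : Matrix (Fin d) (Fin d) ℝ) (u : Fin d → ℝ) :
    euclNorm (M *ᵥ u) ^ 2 ≤ (∑ i, ∑ j, M i j ^ 2) * euclNorm u ^ 2 := by
  rw [euclNorm_sq, euclNorm_sq, Finset.sum_mul]
  exact Finset.sum_le_sum fun i _ => by
    simpa [mulVec, dotProduct] using Finset.sum_mul_sq_le_sq_mul_sq Finset.univ (M i) u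

theorem euclNorm_mulVec_add_mulVec_sq_le {A B : Matrix (Fin d) (Fin d) ℝ} (hA : A.IsSymm)
    (hB : B.IsSymm) {u w : Fin d → ℝ} {η : ℝ} (h : euclNorm u ^ 2 ≤ η * euclNorm w ^ 2) :
    euclNorm (A *ᵥ u + B *ᵥ w) ^ 2 ≤
      2 * (trace (B ^ 2) + η * trace (A ^ 2)) * euclNorm w ^ 2 := by
  calc euclNorm (A *ᵥ u + B *ᵥ w) ^ 2
      ≤ 2 * euclNorm (A *ᵥ u) ^ 2 + 2 * euclNorm (B *ᵥ w) ^ 2 := euclNorm_add_sq_le _ _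
    _ ≤ 2 * ((∑ i, ∑ j, A i j ^ 2) * euclNorm u ^ 2)
          + 2 * ((∑ i, ∑ j, B i j ^ 2) * euclNorm w ^ 2) := by
      gcongr <;> exact euclNorm_mulVec_sq_le _ _
    _ ≤ 2 * ((∑ i, ∑ j, A i j ^ 2) * (η * euclNorm w ^ 2))
          + 2 * ((∑ i, ∑ j, B i j ^ 2) * euclNorm w ^ 2) := by gcongr
    _ = 2 * (trace (B ^ 2) + η * trace (A ^ 2)) * euclNorm w ^ 2 := by
      rw [hA.trace_sq, hB.trace_sq]; ring

end EuclNorm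

theorem sobolev_norm_bound_jacobian_general {d : ℕ} (θ : ℝ)
    (H : ℝ → Matrix (Fin d) (Fin d) ℝ) (b x₀ : ℝ → (Fin d → ℝ))
    (hH : DifferentiableAt ℝ H θ) (hb : DifferentiableAt ℝ b θ)
    (hx₀ : DifferentiableAt ℝ x₀ θ)
    (hsym : (H θ).IsSymm) (hpd : (H θ).PosDef)
    (hcomm : H θ * deriv H θ = deriv H θ * H θ)
    (P : Polynomial ℝ)
    (xstar : ℝ → (Fin d → ℝ))
    (hxstar : ∀ θ' : ℝ, xstar θ' = -((H θ')⁻¹.mulVec (b θ')))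
    (xt : ℝ → (Fin d → ℝ))
    (hxt : ∀ θ' : ℝ, xt θ' =
      xstar θ' + ((Polynomial.aeval (H θ')) P).mulVec (x₀ θ' - xstar θ'))
    (η : ℝ)
    (hbound : euclNorm ((deriv H θ).mulVec (x₀ θ - xstar θ)) ^ 2 ≤
      η * euclNorm (deriv x₀ θ - deriv xstar θ) ^ 2) :
    euclNorm (deriv xt θ - deriv xstar θ) ^ 2 ≤
      2 * (Matrix.trace (((Polynomial.aeval (H θ)) P) ^ 2)
            + η * Matrix.trace (((Polynomial.aeval (H θ)) P.derivative) ^ 2)) *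
        euclNorm (deriv x₀ θ - deriv xstar θ) ^ 2 := by
  have hstar : DifferentiableAt ℝ xstar θ := by
    rw [funext hxstar]
    exact ((hH.matrix_inv_s7 hpd.isUnit).hasDerivAt.matrix_mulVec_s7 hb.hasDerivAt).differentiableAt.neg
  have hderiv : HasDerivAt xt (deriv xstar θ + ((aeval (H θ) (derivative P) * deriv H θ) *ᵥ
      (x₀ θ - xstar θ) + aeval (H θ) P *ᵥ (deriv x₀ θ - deriv xstar θ))) θ := by
    rw [funext hxt]
    exact hstar.hasDerivAt.add ((hH.hasDerivAt.matrix_aeval_s7 hcomm P).matrix_mulVec_s7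
      (hx₀.hasDerivAt.sub hstar.hasDerivAt))
  rw [hderiv.deriv, add_sub_cancel_left, ← mulVec_mulVec]
  exact euclNorm_mulVec_add_mulVec_sq_le (hsym.aeval _) (hsym.aeval _) hbound

/-- Sobolev-norm bound on the Jacobian error (Proposition 4.2, deterministic form). -/
theorem sobolev_norm_bound_jacobian {d : ℕ} (hd : 1 ≤ d) (θ : ℝ)
    (H : ℝ → Matrix (Fin d) (Fin d) ℝ) (b x₀ : ℝ → (Fin d → ℝ))
    (hH : DifferentiableAt ℝ H θ) (hb : DifferentiableAt ℝ b θ)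
    (hx₀ : DifferentiableAt ℝ x₀ θ)
    (hsym : (H θ).IsSymm) (hpd : (H θ).PosDef)
    (hcomm : H θ * deriv H θ = deriv H θ * H θ)
    (P : Polynomial ℝ) (hP0 : P.eval 0 = 1)
    (xstar : ℝ → (Fin d → ℝ))
    (hxstar : ∀ θ' : ℝ, xstar θ' = -((H θ')⁻¹.mulVec (b θ')))
    (xt : ℝ → (Fin d → ℝ))
    (hxt : ∀ θ' : ℝ, xt θ' =
      xstar θ' + ((Polynomial.aeval (H θ')) P).mulVec (x₀ θ' - xstar θ'))
    (η : ℝ) (hη : 0 ≤ η)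
    (hbound : euclNorm ((deriv H θ).mulVec (x₀ θ - xstar θ)) ^ 2 ≤
      η * euclNorm (deriv x₀ θ - deriv xstar θ) ^ 2) :
    euclNorm (deriv xt θ - deriv xstar θ) ^ 2 ≤
      2 * (Matrix.trace (((Polynomial.aeval (H θ)) P) ^ 2)
            + η * Matrix.trace (((Polynomial.aeval (H θ)) P.derivative) ^ 2)) *
        euclNorm (deriv x₀ θ - deriv xstar θ) ^ 2 :=
  sobolev_norm_bound_jacobian_general θ H b x₀ hH hb hx₀ hsym hpd hcomm P xstar hxstar xt hxt η
    hbound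
end
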